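/- (FP inner-product distortion under the infinite-exponent independent noise model.) Fix x, y ∈ ℝⁿ and an integer M ≥ 0. For each i ∈ [n], let e_i, f_i be uniform on 2^{−M}·[−1/2, 1/2), and let ρ_i, σ_i be distributed as 2^{−U} with U uniform on [0,1); assume that all 4n random variables {e_i, f_i, ρ_i, σ_i}_{i∈[n]} are mutually independent. Let e_FP = ∑_{i=1}^n x_i y_i (ρ_i e_i + σ_i f_i + ρ_i σ_i e_i f_i). Then 𝔼[e_FP²] = (2^{−2M}/12)·(∑_{i=1}^n x_i² y_i²)·(2C + C²·2^{−2M}/12), where C = 𝔼[2^{−2U}], U ~ Uniform[0,1). -/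

import Mathlib

/-!
Since `1 + A = (1 + ρ e) (1 + σ f)` for the per-coordinate error `A = ρ e + σ f + ρ σ e f`, each
`Aᵢ` is a product of two independent factors of mean one, minus one. Hence the `Aᵢ` are centred
and pairwise independent, so `𝔼[e_FP²] = ∑ (xᵢ yᵢ)² 𝔼[Aᵢ²]`, and
`𝔼[Aᵢ²] = Var((1 + ρ e)(1 + σ f)) = 𝔼[(1 + ρ e)²] 𝔼[(1 + σ f)²] - 1 = (1 + C s²)² - 1` with
`s² = 𝔼[e²] = 2^{-2M}/12`.
-/

open MeasureTheory ProbabilityTheory Set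

section Moments

variable {Ω : Type*} [MeasurableSpace Ω] {μ : Measure Ω}

lemma integral_sub_integral_sq [IsProbabilityMeasure μ] {Z : Ω → ℝ} (hZ : MemLp Z 2 μ) :
    ∫ ω, (Z ω - μ[Z]) ^ 2 ∂μ = ∫ ω, Z ω ^ 2 ∂μ - μ[Z] ^ 2 := by
  rw [← variance_eq_integral hZ.aemeasurable, variance_eq_sub hZ]
  rfl

lemma integral_sq_sum_of_pairwise_indepFun [IsFiniteMeasure μ] {ι : Type*} {s : Finset ι}
    {X : ι → Ω → ℝ} (hX : ∀ i ∈ s, MemLp (X i) 2 μ) (hX0 : ∀ i ∈ s, μ[X i] = 0)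
    (hindep : Set.Pairwise ↑s fun i j => X i ⟂ᵢ[μ] X j) :
    ∫ ω, (∑ i ∈ s, X i ω) ^ 2 ∂μ = ∑ i ∈ s, ∫ ω, X i ω ^ 2 ∂μ := by
  have hsum0 : μ[∑ i ∈ s, X i] = 0 := by
    simp only [Finset.sum_apply]
    rw [integral_finsetSum s fun i hi => (hX i hi).integrable one_le_two]
    exact Finset.sum_eq_zero hX0
  have hsum_meas : AEMeasurable (∑ i ∈ s, X i) μ := (memLp_finsetSum' s hX).aemeasurable
  simp_rw [← Finset.sum_apply]
  rw [← variance_of_integral_eq_zero hsum_meas hsum0, IndepFun.variance_sum hX hindep]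
  exact Finset.sum_congr rfl fun i hi =>
    variance_of_integral_eq_zero (hX i hi).aemeasurable (hX0 i hi)

namespace ProbabilityTheory.IndepFun

variable {X Y : Ω → ℝ}

lemma integral_mul_sq (hXY : X ⟂ᵢ[μ] Y) (hX : AEMeasurable X μ) (hY : AEMeasurable Y μ) :
    ∫ ω, (X ω * Y ω) ^ 2 ∂μ = (∫ ω, X ω ^ 2 ∂μ) * ∫ ω, Y ω ^ 2 ∂μ := by
  simp_rw [mul_pow]
  exact hXY.integral_fun_comp_mul_comp hX hY (f := (· ^ 2)) (g := (· ^ 2))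
    (by fun_prop) (by fun_prop)

lemma memLp_two_mul (hXY : X ⟂ᵢ[μ] Y) (hX : MemLp X 2 μ) (hY : MemLp Y 2 μ) :
    MemLp (fun ω => X ω * Y ω) 2 μ := by
  refine (memLp_two_iff_integrable_sq (hX.1.mul hY.1)).2 ?_
  simp_rw [Pi.mul_apply, mul_pow]
  exact (hXY.comp (measurable_id.pow_const 2) (measurable_id.pow_const 2)).integrable_mul
    hX.integrable_sq hY.integrable_sq

variable [IsProbabilityMeasure μ]

lemma integral_one_add_mul (hXY : X ⟂ᵢ[μ] Y) (hX : MemLp X 2 μ) (hY : MemLp Y 2 μ)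
    (hY0 : μ[Y] = 0) : ∫ ω, (1 + X ω * Y ω) ∂μ = 1 := by
  rw [integral_add (integrable_const 1) ((hXY.memLp_two_mul hX hY).integrable one_le_two),
    hXY.integral_fun_mul_eq_mul_integral hX.1 hY.1, hY0]
  simp

lemma integral_one_add_mul_sq (hXY : X ⟂ᵢ[μ] Y) (hX : MemLp X 2 μ) (hY : MemLp Y 2 μ)
    (hY0 : μ[Y] = 0) :
    ∫ ω, (1 + X ω * Y ω) ^ 2 ∂μ = 1 + (∫ ω, X ω ^ 2 ∂μ) * ∫ ω, Y ω ^ 2 ∂μ := by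
  have hZ : MemLp (fun ω => 1 + X ω * Y ω) 2 μ :=
    (memLp_const (1 : ℝ)).add (hXY.memLp_two_mul hX hY)
  have h := integral_sub_integral_sq hZ
  rw [integral_one_add_mul hXY hX hY hY0] at h
  simp only [add_sub_cancel_left, one_pow,
    hXY.integral_mul_sq hX.aemeasurable hY.aemeasurable] at h
  linarith

lemma integral_mul_sub_one_sq (hXY : X ⟂ᵢ[μ] Y) (hX : MemLp X 2 μ) (hY : MemLp Y 2 μ)
    (hX1 : μ[X] = 1) (hY1 : μ[Y] = 1) :
    ∫ ω, (X ω * Y ω - 1) ^ 2 ∂μ = (∫ ω, X ω ^ 2 ∂μ) * (∫ ω, Y ω ^ 2 ∂μ) - 1 := by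
  have hXY1 : ∫ ω, X ω * Y ω ∂μ = 1 := by
    rw [hXY.integral_fun_mul_eq_mul_integral hX.1 hY.1, hX1, hY1, one_mul]
  have h := integral_sub_integral_sq (hXY.memLp_two_mul hX hY)
  rwa [hXY1, hXY.integral_mul_sq hX.aemeasurable hY.aemeasurable, one_pow] at h

end ProbabilityTheory.IndepFun

end Moments

section Laws

variable {Ω : Type*} [MeasurableSpace Ω] {μ : Measure Ω} {X : Ω → ℝ} {a b c : ℝ}

lemma isProbabilityMeasure_cond_Ico (hab : a < b) : IsProbabilityMeasure (volume[|Ico a b]) :=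
  cond_isProbabilityMeasure_of_finite (by simp [hab]) (by simp)

lemma integral_cond_Ico (hab : a < b) (φ : ℝ → ℝ) :
    ∫ z, φ z ∂(volume[|Ico a b]) = (b - a)⁻¹ * ∫ x in a..b, φ x := by
  rw [ProbabilityTheory.cond, integral_smul_measure, Real.volume_Ico, ENNReal.toReal_inv,
    ENNReal.toReal_ofReal (by linarith), integral_Ico_eq_integral_Ioo,
    ← integral_Ioc_eq_integral_Ioo, ← intervalIntegral.integral_of_le hab.le, smul_eq_mul]

namespace MeasureTheory.pdf.IsUniform

lemma aemeasurable_Ico (hu : IsUniform X (Ico a b) μ) (hab : a < b) : AEMeasurable X μ :=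
  hu.aemeasurable (by simp [hab]) (by simp)

lemma memLp_Ico [IsFiniteMeasure μ] (hu : IsUniform X (Ico a b) μ) (hab : a < b)
    (p : ENNReal) : MemLp X p μ := by
  refine MemLp.of_bound (hu.aemeasurable_Ico hab).aestronglyMeasurable (max |a| |b|)
    (ae_of_ae_map (p := fun z => ‖z‖ ≤ max |a| |b|) (hu.aemeasurable_Ico hab) ?_)
  rw [hu]
  exact ae_cond_of_forall_mem measurableSet_Ico fun z hz => abs_le_max_abs_abs hz.1 hz.2.le

lemma integral_comp_Ico (hu : IsUniform X (Ico a b) μ) (hab : a < b) {φ : ℝ → ℝ}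
    (hφ : Measurable φ) : ∫ ω, φ (X ω) ∂μ = (b - a)⁻¹ * ∫ x in a..b, φ x := by
  rw [← integral_map (hu.aemeasurable_Ico hab) hφ.aestronglyMeasurable, hu, integral_cond_Ico hab]

lemma integral_Ico_neg (hu : IsUniform X (Ico (-c) c) μ) (hc : 0 < c) : μ[X] = 0 := by
  rw [hu.integral_comp_Ico (φ := fun x => x) (by linarith) measurable_id, integral_id]
  ring

lemma integral_sq_Ico_neg (hu : IsUniform X (Ico (-c) c) μ) (hc : 0 < c) :
    ∫ ω, X ω ^ 2 ∂μ = c ^ 2 / 3 := by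
  rw [hu.integral_comp_Ico (φ := fun x => x ^ 2) (by linarith) (measurable_id.pow_const 2),
    integral_pow]
  field_simp
  ring

end MeasureTheory.pdf.IsUniform

lemma identDistrib_two_rpow_neg (h : μ.map X = (volume[|Ico (0 : ℝ) 1]).map fun u => 2 ^ (-u)) :
    IdentDistrib X (fun u : ℝ => (2 : ℝ) ^ (-u)) μ (volume[|Ico 0 1]) := by
  have := isProbabilityMeasure_cond_Ico (zero_lt_one' ℝ)
  have hg : AEMeasurable (fun u : ℝ => (2 : ℝ) ^ (-u)) (volume[|Ico 0 1]) :=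
    (measurable_const.pow measurable_neg).aemeasurable
  refine ⟨AEMeasurable.of_map_ne_zero ?_, hg, h⟩
  rw [h, Measure.map_ne_zero_iff hg]
  exact IsProbabilityMeasure.ne_zero _

lemma memLp_of_map_eq_two_rpow_neg [IsFiniteMeasure μ]
    (h : μ.map X = (volume[|Ico (0 : ℝ) 1]).map fun u => 2 ^ (-u)) (p : ENNReal) :
    MemLp X p μ := by
  have := isProbabilityMeasure_cond_Ico (zero_lt_one' ℝ)
  refine (identDistrib_two_rpow_neg h).memLp_iff.2 (MemLp.of_bound
    (measurable_const.pow measurable_neg).aestronglyMeasurable 1 ?_)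
  refine ae_cond_of_forall_mem measurableSet_Ico fun u hu => ?_
  rw [Real.norm_eq_abs, abs_of_pos (by positivity)]
  exact Real.rpow_le_one_of_one_le_of_nonpos one_le_two (by linarith [hu.1])

lemma integral_sq_of_map_eq_two_rpow_neg
    (h : μ.map X = (volume[|Ico (0 : ℝ) 1]).map fun u => 2 ^ (-u)) :
    ∫ ω, X ω ^ 2 ∂μ = ∫ u : ℝ, (2 : ℝ) ^ (-(2 * u)) ∂(volume[|Ico 0 1]) := by
  calc ∫ ω, X ω ^ 2 ∂μ = ∫ u : ℝ, ((2 : ℝ) ^ (-u)) ^ 2 ∂(volume[|Ico 0 1]) :=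
        ((identDistrib_two_rpow_neg h).comp (measurable_id.pow_const 2)).integral_eq
    _ = _ := by
      congr 1 with u
      rw [← Real.rpow_mul_natCast zero_le_two]
      ring_nf

end Laws

section IEIN

variable {Ω : Type*} [MeasurableSpace Ω] {μ : Measure Ω} {ι : Type*} {e f r s : ι → Ω → ℝ}

lemma ProbabilityTheory.iIndepFun.indepFun_comp_sumElim_of_ne
    (hindep : iIndepFun (Sum.elim (Sum.elim e f) (Sum.elim r s)) μ)
    (hmeas : ∀ k, AEMeasurable (Sum.elim (Sum.elim e f) (Sum.elim r s) k) μ)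
    {F : ℝ → ℝ → ℝ → ℝ → ℝ}
    (hF : Measurable fun p : ℝ × ℝ × ℝ × ℝ => F p.1 p.2.1 p.2.2.1 p.2.2.2)
    {i j : ι} (hij : i ≠ j) :
    (fun ω => F (e i ω) (f i ω) (r i ω) (s i ω)) ⟂ᵢ[μ]
      (fun ω => F (e j ω) (f j ω) (r j ω) (s j ω)) := by
  classical
  let block : ι → Finset ((ι ⊕ ι) ⊕ (ι ⊕ ι)) := fun i =>
    {.inl (.inl i), .inl (.inr i), .inr (.inl i), .inr (.inr i)}
  let π : ∀ i, (block i → ℝ) → ℝ × ℝ × ℝ × ℝ := fun i v =>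
    (v ⟨.inl (.inl i), by simp [block]⟩, v ⟨.inl (.inr i), by simp [block]⟩,
      v ⟨.inr (.inl i), by simp [block]⟩, v ⟨.inr (.inr i), by simp [block]⟩)
  have hπ : ∀ i, Measurable (π i) := fun i => by fun_prop
  exact (hindep.indepFun_finset₀ (block i) (block j) (by simp [block, hij.symm]) hmeas).comp
    (hF.comp (hπ i)) (hF.comp (hπ j))

theorem integral_sq_sum_mul_one_add_mul_one_add_sub_one [IsProbabilityMeasure μ] [Fintype ι]
    (hindep : iIndepFun (Sum.elim (Sum.elim e f) (Sum.elim r s)) μ)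
    (he : ∀ i, MemLp (e i) 2 μ) (hf : ∀ i, MemLp (f i) 2 μ)
    (hr : ∀ i, MemLp (r i) 2 μ) (hs : ∀ i, MemLp (s i) 2 μ)
    (he0 : ∀ i, μ[e i] = 0) (hf0 : ∀ i, μ[f i] = 0) (c : ι → ℝ) :
    ∫ ω, (∑ i, c i * ((1 + r i ω * e i ω) * (1 + s i ω * f i ω) - 1)) ^ 2 ∂μ =
      ∑ i, c i ^ 2 * ((1 + (∫ ω, r i ω ^ 2 ∂μ) * ∫ ω, e i ω ^ 2 ∂μ) *
        (1 + (∫ ω, s i ω ^ 2 ∂μ) * ∫ ω, f i ω ^ 2 ∂μ) - 1) := by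
  have hmeas : ∀ k, AEMeasurable (Sum.elim (Sum.elim e f) (Sum.elim r s) k) μ := by
    rintro ((i | i) | (i | i))
    exacts [(he i).aemeasurable, (hf i).aemeasurable, (hr i).aemeasurable, (hs i).aemeasurable]
  have hre : ∀ i, r i ⟂ᵢ[μ] e i := fun i =>
    hindep.indepFun (i := .inr (.inl i)) (j := .inl (.inl i)) (by simp)
  have hsf : ∀ i, s i ⟂ᵢ[μ] f i := fun i =>
    hindep.indepFun (i := .inr (.inr i)) (j := .inl (.inr i)) (by simp)
  have hUV : ∀ i, (fun ω => 1 + r i ω * e i ω) ⟂ᵢ[μ] (fun ω => 1 + s i ω * f i ω) := fun i =>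
    (hindep.indepFun_prodMk_prodMk₀ hmeas (.inr (.inl i)) (.inl (.inl i)) (.inr (.inr i))
      (.inl (.inr i)) (by simp) (by simp) (by simp) (by simp)).comp
      (φ := fun p : ℝ × ℝ => 1 + p.1 * p.2) (ψ := fun p : ℝ × ℝ => 1 + p.1 * p.2)
      (by fun_prop) (by fun_prop)
  have hU : ∀ i, MemLp (fun ω => 1 + r i ω * e i ω) 2 μ := fun i =>
    (memLp_const (1 : ℝ)).add ((hre i).memLp_two_mul (hr i) (he i))
  have hV : ∀ i, MemLp (fun ω => 1 + s i ω * f i ω) 2 μ := fun i =>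
    (memLp_const (1 : ℝ)).add ((hsf i).memLp_two_mul (hs i) (hf i))
  have hU1 := fun i => (hre i).integral_one_add_mul (hr i) (he i) (he0 i)
  have hV1 := fun i => (hsf i).integral_one_add_mul (hs i) (hf i) (hf0 i)
  rw [integral_sq_sum_of_pairwise_indepFun
    (X := fun i ω => c i * ((1 + r i ω * e i ω) * (1 + s i ω * f i ω) - 1))]
  · refine Finset.sum_congr rfl fun i _ => ?_
    simp_rw [mul_pow, integral_const_mul]
    rw [(hUV i).integral_mul_sub_one_sq (hU i) (hV i) (hU1 i) (hV1 i),
      (hre i).integral_one_add_mul_sq (hr i) (he i) (he0 i),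
      (hsf i).integral_one_add_mul_sq (hs i) (hf i) (hf0 i)]
  · exact fun i _ => (((hUV i).memLp_two_mul (hU i) (hV i)).sub (memLp_const 1)).const_mul (c i)
  · intro i _
    rw [integral_const_mul, integral_sub (((hUV i).memLp_two_mul (hU i) (hV i)).integrable
      one_le_two) (integrable_const 1), (hUV i).integral_fun_mul_eq_mul_integral (hU i).1 (hV i).1,
      hU1 i, hV1 i]
    simp
  · intro i _ j _ hij
    exact (hindep.indepFun_comp_sumElim_of_ne hmeas
      (F := fun a b ρ σ => (1 + ρ * a) * (1 + σ * b) - 1) (by fun_prop) hij).comp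
      (measurable_const_mul (c i)) (measurable_const_mul (c j))

end IEIN

theorem stmt_13_general (n : ℕ) (x y : Fin n → ℝ) (M : ℕ)
    {Ω : Type*} [MeasurableSpace Ω] (P : Measure Ω) [IsProbabilityMeasure P]
    (e f r s : Fin n → Ω → ℝ)
    (hindep : iIndepFun
      (Sum.elim (Sum.elim e f) (Sum.elim r s) : (Fin n ⊕ Fin n) ⊕ (Fin n ⊕ Fin n) → Ω → ℝ) P)
    (hlawe : ∀ i, Measure.map (e i) P =
      ProbabilityTheory.cond volume
        (Set.Ico (-((2 : ℝ) ^ (-(M : ℤ))) / 2) (((2 : ℝ) ^ (-(M : ℤ))) / 2)))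
    (hlawf : ∀ i, Measure.map (f i) P =
      ProbabilityTheory.cond volume
        (Set.Ico (-((2 : ℝ) ^ (-(M : ℤ))) / 2) (((2 : ℝ) ^ (-(M : ℤ))) / 2)))
    (hlawr : ∀ i, Measure.map (r i) P =
      Measure.map (fun u : ℝ => (2 : ℝ) ^ (-u))
        (ProbabilityTheory.cond volume (Set.Ico (0 : ℝ) 1)))
    (hlaws : ∀ i, Measure.map (s i) P =
      Measure.map (fun u : ℝ => (2 : ℝ) ^ (-u))
        (ProbabilityTheory.cond volume (Set.Ico (0 : ℝ) 1)))
    (C : ℝ)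
    (hC : C = ∫ u, (2 : ℝ) ^ (-(2 * u)) ∂(ProbabilityTheory.cond volume (Set.Ico (0 : ℝ) 1))) :
    (∫ ω, (∑ i, x i * y i *
        (r i ω * e i ω + s i ω * f i ω + r i ω * s i ω * e i ω * f i ω)) ^ 2 ∂P)
      = ((2 : ℝ) ^ (-(2 * M : ℤ)) / 12) * (∑ i, x i ^ 2 * y i ^ 2)
        * (2 * C + C ^ 2 * (2 : ℝ) ^ (-(2 * M : ℤ)) / 12) := by
  set W : ℝ := (2 : ℝ) ^ (-(M : ℤ))
  have hW : 0 < W / 2 := by positivity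
  have hue : ∀ i, pdf.IsUniform (e i) (Ico (-(W / 2)) (W / 2)) P := fun i => by
    rw [← neg_div]; exact hlawe i
  have huf : ∀ i, pdf.IsUniform (f i) (Ico (-(W / 2)) (W / 2)) P := fun i => by
    rw [← neg_div]; exact hlawf i
  have hsplit : ∀ ω, ∑ i, x i * y i *
      (r i ω * e i ω + s i ω * f i ω + r i ω * s i ω * e i ω * f i ω) =
      ∑ i, x i * y i * ((1 + r i ω * e i ω) * (1 + s i ω * f i ω) - 1) := fun ω =>
    Finset.sum_congr rfl fun i _ => by ring
  simp_rw [hsplit]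
  rw [integral_sq_sum_mul_one_add_mul_one_add_sub_one hindep
    (fun i => (hue i).memLp_Ico (by linarith) 2) (fun i => (huf i).memLp_Ico (by linarith) 2)
    (fun i => memLp_of_map_eq_two_rpow_neg (hlawr i) 2)
    (fun i => memLp_of_map_eq_two_rpow_neg (hlaws i) 2)
    (fun i => (hue i).integral_Ico_neg hW) (fun i => (huf i).integral_Ico_neg hW)]
  simp only [fun i => (hue i).integral_sq_Ico_neg hW, fun i => (huf i).integral_sq_Ico_neg hW,
    fun i => integral_sq_of_map_eq_two_rpow_neg (hlawr i),
    fun i => integral_sq_of_map_eq_two_rpow_neg (hlaws i), ← hC]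
  have hW2 : (2 : ℝ) ^ (-(2 * M : ℤ)) = W ^ 2 := by
    rw [← zpow_natCast, ← zpow_mul]; ring_nf
  rw [hW2, Finset.mul_sum, Finset.sum_mul]
  exact Finset.sum_congr rfl fun i _ => by ring

/-- **FP inner-product distortion under IEIN.**  Fix `x, y ∈ ℝⁿ`, `M ∈ ℕ`.
For each `i` let `e_i, f_i` be uniform on `2^{−M}[−1/2, 1/2)` and `ρ_i, σ_i` distributed
as `2^{−U}` with `U` uniform on `[0,1)`, all `4n` variables mutually independent.  With
`e_FP = ∑ᵢ xᵢ yᵢ (ρᵢ eᵢ + σᵢ fᵢ + ρᵢ σᵢ eᵢ fᵢ)`, one has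
`𝔼[e_FP²] = (2^{−2M}/12)·(∑ᵢ xᵢ² yᵢ²)·(2C + C²·2^{−2M}/12)` with `C = 𝔼[2^{−2U}]`. -/
theorem stmt_13 (n : ℕ) (x y : Fin n → ℝ) (M : ℕ)
    {Ω : Type*} [MeasurableSpace Ω] (P : Measure Ω) [IsProbabilityMeasure P]
    (e f r s : Fin n → Ω → ℝ)
    (hmeas : ∀ i, Measurable (e i) ∧ Measurable (f i) ∧ Measurable (r i) ∧ Measurable (s i))
    (hindep : iIndepFun
      (Sum.elim (Sum.elim e f) (Sum.elim r s) : (Fin n ⊕ Fin n) ⊕ (Fin n ⊕ Fin n) → Ω → ℝ) P)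
    (hlawe : ∀ i, Measure.map (e i) P =
      ProbabilityTheory.cond volume
        (Set.Ico (-((2 : ℝ) ^ (-(M : ℤ))) / 2) (((2 : ℝ) ^ (-(M : ℤ))) / 2)))
    (hlawf : ∀ i, Measure.map (f i) P =
      ProbabilityTheory.cond volume
        (Set.Ico (-((2 : ℝ) ^ (-(M : ℤ))) / 2) (((2 : ℝ) ^ (-(M : ℤ))) / 2)))
    (hlawr : ∀ i, Measure.map (r i) P =
      Measure.map (fun u : ℝ => (2 : ℝ) ^ (-u))
        (ProbabilityTheory.cond volume (Set.Ico (0 : ℝ) 1)))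
    (hlaws : ∀ i, Measure.map (s i) P =
      Measure.map (fun u : ℝ => (2 : ℝ) ^ (-u))
        (ProbabilityTheory.cond volume (Set.Ico (0 : ℝ) 1)))
    (C : ℝ)
    (hC : C = ∫ u, (2 : ℝ) ^ (-(2 * u)) ∂(ProbabilityTheory.cond volume (Set.Ico (0 : ℝ) 1))) :
    (∫ ω, (∑ i, x i * y i *
        (r i ω * e i ω + s i ω * f i ω + r i ω * s i ω * e i ω * f i ω)) ^ 2 ∂P)
      = ((2 : ℝ) ^ (-(2 * M : ℤ)) / 12) * (∑ i, x i ^ 2 * y i ^ 2)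
        * (2 * C + C ^ 2 * (2 : ℝ) ^ (-(2 * M : ℤ)) / 12) :=
  stmt_13_general n x y M P e f r s hindep hlawe hlawf hlawr hlaws C hC
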